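/- Let H be a real Hilbert space, N a positive integer, and F₁,…,F_N : H → ℝ differentiable functions each having L-Lipschitz gradient (L > 0). Let F = (1/N)·∑_{i=1}^N Fᵢ. Fix θ ∈ H with ∇Fᵢ(θ) ≠ 0 for every i, fix ρ > 0, and fix nonzero vectors g₁,…,g_N ∈ H. Define δᵢ = ∇Fᵢ(θ) − ∇F(θ), ζᵢ = gᵢ − ∇Fᵢ(θ), sᵢ = Fᵢ(θ + ρ·gᵢ/‖gᵢ‖) − Fᵢ(θ), s̄ = (1/N)·∑_{j=1}^N sⱼ, and Δ_FI = (1/N)·∑_{i=1}^N (sᵢ − s̄)². Then Δ_FI ≤ (3ρ²/N)·∑_{i=1}^N (‖δᵢ‖² + 4‖ζᵢ‖²) + (3/4)·L²·ρ⁴. -/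

import Mathlib

/-!
Write `uᵢ = ρ gᵢ / ‖gᵢ‖` and `c = ρ ‖∇F(θ)‖`. The descent lemma gives
`|sᵢ - ⟪∇Fᵢ(θ), uᵢ⟫| ≤ Lρ²/2`, and since `⟪gᵢ, uᵢ⟫ = ρ‖gᵢ‖` we get
`|sᵢ - c| ≤ ρ‖δᵢ‖ + 2ρ‖ζᵢ‖ + Lρ²/2`. Squaring with `(x + y + z)² ≤ 3(x² + y² + z²)` and
using that the mean minimises `∑ (sᵢ - c)²` over `c` gives the bound.
-/

open InnerProductSpace Finset

theorem Finset.sum_sq_sub_mean_le {ι : Type*} (s : Finset ι) (x : ι → ℝ) (c : ℝ) :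
    ∑ i ∈ s, (x i - (∑ j ∈ s, x j) / #s) ^ 2 ≤ ∑ i ∈ s, (x i - c) ^ 2 := by
  set m := (∑ j ∈ s, x j) / #s
  have hdev : ∑ i ∈ s, (x i - m) = 0 := by
    rcases s.eq_empty_or_nonempty with rfl | hs
    · simp
    · rw [sum_sub_distrib, sum_const, nsmul_eq_mul, mul_div_cancel₀ _ (by positivity), sub_self]
  calc ∑ i ∈ s, (x i - m) ^ 2
      ≤ ∑ i ∈ s, (x i - m) ^ 2 + 2 * (m - c) * ∑ i ∈ s, (x i - m) + ∑ _i ∈ s, (m - c) ^ 2 := by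
        rw [hdev, mul_zero, add_zero]
        exact le_add_of_nonneg_right (sum_nonneg fun _ _ => sq_nonneg _)
    _ = ∑ i ∈ s, (x i - c) ^ 2 := by
        rw [mul_sum, ← sum_add_distrib, ← sum_add_distrib]
        exact sum_congr rfl fun _ _ => by ring

theorem norm_div_norm_smul_le {E : Type*} [NormedAddCommGroup E] [NormedSpace ℝ E]
    {ρ : ℝ} (hρ : 0 ≤ ρ) (g : E) : ‖(ρ / ‖g‖) • g‖ ≤ ρ := by
  rw [norm_smul, Real.norm_of_nonneg (by positivity)]
  rcases eq_or_ne ‖g‖ 0 with hg | hg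
  · simpa [hg] using hρ
  · rw [div_mul_cancel₀ _ hg]

theorem real_inner_div_norm_smul_self {E : Type*} [NormedAddCommGroup E] [InnerProductSpace ℝ E]
    (ρ : ℝ) (g : E) : ⟪g, (ρ / ‖g‖) • g⟫_ℝ = ρ * ‖g‖ := by
  rw [real_inner_smul_right, real_inner_self_eq_norm_sq]
  rcases eq_or_ne ‖g‖ 0 with hg | hg
  · simp [hg]
  · field_simp

section LipschitzGradient

variable {H : Type*} [NormedAddCommGroup H] [InnerProductSpace ℝ H] [CompleteSpace H]
  {f : H → ℝ} {L : ℝ}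

theorem abs_sub_sub_inner_gradient_le (hf : Differentiable ℝ f)
    (hlip : ∀ x y, ‖gradient f x - gradient f y‖ ≤ L * ‖x - y‖) (x u : H) :
    |f (x + u) - f x - ⟪gradient f x, u⟫_ℝ| ≤ L / 2 * ‖u‖ ^ 2 := by
  set φ : ℝ → ℝ := fun t => f (x + t • u) - f x - t * ⟪gradient f x, u⟫_ℝ
  have hφ : ∀ t, HasDerivAt φ (⟪gradient f (x + t • u) - gradient f x, u⟫_ℝ) t := by
    intro t
    have hline : HasDerivAt (fun t : ℝ => x + t • u) u t := by
      simpa using ((hasDerivAt_id t).smul_const u).const_add x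
    exact ((((hf _).hasGradientAt.hasFDerivAt.comp_hasDerivAt t hline).sub_const (f x)).sub
      ((hasDerivAt_id t).mul_const ⟪gradient f x, u⟫_ℝ)).congr_deriv (by simp [inner_sub_left])
  have hφ'_le : ∀ t ∈ Set.Ico (0 : ℝ) 1,
      ‖⟪gradient f (x + t • u) - gradient f x, u⟫_ℝ‖ ≤ L * ‖u‖ ^ 2 * t := by
    intro t ht
    calc ‖⟪gradient f (x + t • u) - gradient f x, u⟫_ℝ‖
        ≤ ‖gradient f (x + t • u) - gradient f x‖ * ‖u‖ := norm_inner_le_norm _ _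
      _ ≤ L * ‖x + t • u - x‖ * ‖u‖ := by gcongr; exact hlip _ _
      _ = L * ‖u‖ ^ 2 * t := by
        rw [add_sub_cancel_left, norm_smul, Real.norm_of_nonneg ht.1]; ring
  have hB : ∀ t, HasDerivAt (fun t : ℝ => L / 2 * ‖u‖ ^ 2 * t ^ 2) (L * ‖u‖ ^ 2 * t) t :=
    fun t => ((hasDerivAt_pow 2 t).const_mul (L / 2 * ‖u‖ ^ 2)).congr_deriv (by ring)
  simpa [φ] using image_norm_le_of_norm_deriv_right_le_deriv_boundary
    (fun t _ => (hφ t).continuousAt.continuousWithinAt) (fun t _ => (hφ t).hasDerivWithinAt)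
    (by simp [φ]) hB hφ'_le (Set.right_mem_Icc.2 zero_le_one)

theorem abs_sub_sub_mul_norm_le (hf : Differentiable ℝ f) (hL : 0 ≤ L)
    (hlip : ∀ x y, ‖gradient f x - gradient f y‖ ≤ L * ‖x - y‖) (θ g v : H) {ρ : ℝ} (hρ : 0 ≤ ρ) :
    |f (θ + (ρ / ‖g‖) • g) - f θ - ρ * ‖v‖|
      ≤ ρ * ‖gradient f θ - v‖ + 2 * ρ * ‖g - gradient f θ‖ + L / 2 * ρ ^ 2 := by
  set u := (ρ / ‖g‖) • g
  set d := gradient f θ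
  have hu : ‖u‖ ≤ ρ := norm_div_norm_smul_le hρ g
  have hsplit : f (θ + u) - f θ - ρ * ‖v‖
      = (f (θ + u) - f θ - ⟪d, u⟫_ℝ) - ⟪g - d, u⟫_ℝ + ρ * (‖g‖ - ‖d‖) + ρ * (‖d‖ - ‖v‖) := by
    rw [inner_sub_left, real_inner_div_norm_smul_self]; ring
  have h₁ : |f (θ + u) - f θ - ⟪d, u⟫_ℝ| ≤ L / 2 * ρ ^ 2 :=
    (abs_sub_sub_inner_gradient_le hf hlip θ u).trans (by gcongr)
  have h₂ : |⟪g - d, u⟫_ℝ| ≤ ρ * ‖g - d‖ :=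
    (abs_real_inner_le_norm _ _).trans (by rw [mul_comm]; gcongr)
  have h₃ : |ρ * (‖g‖ - ‖d‖)| ≤ ρ * ‖g - d‖ := by
    rw [abs_mul, abs_of_nonneg hρ]; gcongr; exact abs_norm_sub_norm_le _ _
  have h₄ : |ρ * (‖d‖ - ‖v‖)| ≤ ρ * ‖d - v‖ := by
    rw [abs_mul, abs_of_nonneg hρ]; gcongr; exact abs_norm_sub_norm_le _ _
  rw [hsplit, abs_le]
  constructor <;>
    linarith [(abs_le.mp h₁).1, (abs_le.mp h₁).2, (abs_le.mp h₂).1, (abs_le.mp h₂).2,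
      (abs_le.mp h₃).1, (abs_le.mp h₃).2, (abs_le.mp h₄).1, (abs_le.mp h₄).2]

end LipschitzGradient

theorem flatness_incompatibility_deterministic_general
    {H : Type*} [NormedAddCommGroup H] [InnerProductSpace ℝ H] [CompleteSpace H]
    {N : ℕ}
    (Fi : Fin N → H → ℝ) (L : ℝ) (hL : 0 < L)
    (hdiff : ∀ i, Differentiable ℝ (Fi i))
    (hlip : ∀ i, ∀ x y : H, ‖gradient (Fi i) x - gradient (Fi i) y‖ ≤ L * ‖x - y‖)
    (F : H → ℝ)
    (θ : H)
    (ρ : ℝ) (hρ : 0 < ρ)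
    (g : Fin N → H)
    (δ : Fin N → H) (hδ : ∀ i, δ i = gradient (Fi i) θ - gradient F θ)
    (ζ : Fin N → H) (hζ : ∀ i, ζ i = g i - gradient (Fi i) θ)
    (s : Fin N → ℝ)
    (hs : ∀ i, s i = Fi i (θ + (ρ / ‖g i‖) • g i) - Fi i θ)
    (sbar : ℝ) (hsbar : sbar = (1 / (N : ℝ)) * ∑ j, s j)
    (ΔFI : ℝ) (hΔ : ΔFI = (1 / (N : ℝ)) * ∑ i, (s i - sbar) ^ 2) :
    ΔFI ≤ (3 * ρ ^ 2 / (N : ℝ)) * ∑ i, (‖δ i‖ ^ 2 + 4 * ‖ζ i‖ ^ 2)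
        + (3 / 4) * L ^ 2 * ρ ^ 4 := by
  set c := ρ * ‖gradient F θ‖
  have hdev : ∀ i,
      (s i - c) ^ 2 ≤ 3 * ρ ^ 2 * (‖δ i‖ ^ 2 + 4 * ‖ζ i‖ ^ 2) + 3 / 4 * L ^ 2 * ρ ^ 4 := by
    intro i
    have h := abs_sub_sub_mul_norm_le (hdiff i) hL.le (hlip i) θ (g i) (gradient F θ) hρ.le
    rw [← hs i, ← hδ i, ← hζ i] at h
    calc (s i - c) ^ 2 ≤ (ρ * ‖δ i‖ + 2 * ρ * ‖ζ i‖ + L / 2 * ρ ^ 2) ^ 2 :=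
          sq_le_sq' (abs_le.mp h).1 (abs_le.mp h).2
      _ ≤ _ := by
        nlinarith [sq_nonneg (ρ * ‖δ i‖ - 2 * ρ * ‖ζ i‖), sq_nonneg (ρ * ‖δ i‖ - L / 2 * ρ ^ 2),
          sq_nonneg (2 * ρ * ‖ζ i‖ - L / 2 * ρ ^ 2)]
  have hmean : sbar = (∑ j, s j) / #(univ : Finset (Fin N)) := by
    rw [hsbar, card_univ, Fintype.card_fin, one_div_mul_eq_div]
  calc ΔFI = 1 / N * ∑ i, (s i - sbar) ^ 2 := hΔ
    _ ≤ 1 / N * ∑ i, (s i - c) ^ 2 := by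
        gcongr 1 / N * ?_
        rw [hmean]; exact sum_sq_sub_mean_le _ _ _
    _ ≤ 1 / N * ∑ i, (3 * ρ ^ 2 * (‖δ i‖ ^ 2 + 4 * ‖ζ i‖ ^ 2) + 3 / 4 * L ^ 2 * ρ ^ 4) := by
        gcongr with i; exact hdev i
    _ = 3 * ρ ^ 2 / N * ∑ i, (‖δ i‖ ^ 2 + 4 * ‖ζ i‖ ^ 2) + N / N * (3 / 4 * L ^ 2 * ρ ^ 4) := by
        rw [sum_add_distrib, ← mul_sum, sum_const, card_univ, Fintype.card_fin, nsmul_eq_mul]; ring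
    _ ≤ _ := by
        gcongr _ + ?_
        exact mul_le_of_le_one_left (by positivity) (div_self_le_one _)

/-- Deterministic (pathwise) core of Lemma 1: flatness incompatibility bound. -/
theorem flatness_incompatibility_deterministic
    {H : Type*} [NormedAddCommGroup H] [InnerProductSpace ℝ H] [CompleteSpace H]
    {N : ℕ} (hN : 0 < N)
    (Fi : Fin N → H → ℝ) (L : ℝ) (hL : 0 < L)
    (hdiff : ∀ i, Differentiable ℝ (Fi i))
    (hlip : ∀ i, ∀ x y : H, ‖gradient (Fi i) x - gradient (Fi i) y‖ ≤ L * ‖x - y‖)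
    (F : H → ℝ) (hF : F = fun x => (1 / (N : ℝ)) * ∑ i, Fi i x)
    (θ : H) (hθ : ∀ i, gradient (Fi i) θ ≠ 0)
    (ρ : ℝ) (hρ : 0 < ρ)
    (g : Fin N → H) (hg : ∀ i, g i ≠ 0)
    (δ : Fin N → H) (hδ : ∀ i, δ i = gradient (Fi i) θ - gradient F θ)
    (ζ : Fin N → H) (hζ : ∀ i, ζ i = g i - gradient (Fi i) θ)
    (s : Fin N → ℝ)
    (hs : ∀ i, s i = Fi i (θ + (ρ / ‖g i‖) • g i) - Fi i θ)
    (sbar : ℝ) (hsbar : sbar = (1 / (N : ℝ)) * ∑ j, s j)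
    (ΔFI : ℝ) (hΔ : ΔFI = (1 / (N : ℝ)) * ∑ i, (s i - sbar) ^ 2) :
    ΔFI ≤ (3 * ρ ^ 2 / (N : ℝ)) * ∑ i, (‖δ i‖ ^ 2 + 4 * ‖ζ i‖ ^ 2)
        + (3 / 4) * L ^ 2 * ρ ^ 4 :=
  flatness_incompatibility_deterministic_general Fi L hL hdiff hlip F θ ρ hρ g δ hδ ζ hζ s hs sbar
    hsbar ΔFI hΔ
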